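/- Let r ≥ 2 and suppose q < n^{-2/(r+1)} and H is a q-sparse graph on n vertices. Then for any copy K of K_{r+1} in H, the number of copies of K_{r+1} in H sharing at least one edge with K is less than (er)^{r+1}. -/

import Mathlib

open SimpleGraph

/-- Number of (unlabeled) copies of `J` in `G`: subgraphs of `G` isomorphic to `J`. -/
noncomputable def copyCount {α β : Type*} (J : SimpleGraph α) (G : SimpleGraph β) : ℕ :=
  Set.ncard {A : G.Subgraph | Nonempty (A.coe ≃g J)}

/-- Expected number of copies of `J` in the Erdős–Rényi random graph `G(n,q)`. -/
noncomputable def expCopies {α : Type*} (n : ℕ) (J : SimpleGraph α) (q : ℝ) : ℝ :=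
  (copyCount J (⊤ : SimpleGraph (Fin n)) : ℝ) * q ^ (Set.ncard J.edgeSet)

/-- `H` is `q`-sparse: every subgraph `I ⊆ H` has `E_q X_I ≥ 1`. -/
def qSparse {n : ℕ} (q : ℝ) (H : SimpleGraph (Fin n)) : Prop :=
  ∀ I : H.Subgraph, 1 ≤ expCopies n I.coe q

/-! Sparsity and `q < n^{-2/(r+1)}` force `2 e(I) < (r+1) v(I)` for every nonempty `I ⊆ H`:
`K_n` contains at most `n^{v(I)}` copies of `I`, so `1 ≤ E X_I < n^{v(I) - 2 e(I)/(r+1)}`.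
Let `U` be the union of `K` with all copies of `K_{r+1}` sharing an edge with `K`. Each copy meets
the union built so far in at least two vertices, so gluing it on does not decrease
`2 e - (r+2) v`, which starts at `-2(r+1)` for `K`. Together with the density bound this gives
`v(U) ≤ 2r+1`. A copy is determined by its vertex set, a subset of `V(U)`, so there are at most
`2^{2r+1} < 4^{r+1} ≤ (er)^{r+1}` of them. -/

lemma Nat.two_mul_choose_two (k : ℕ) : 2 * k.choose 2 = k * (k - 1) := by
  rw [Nat.choose_two_right, Nat.mul_div_cancel' (Nat.even_mul_pred_self k).two_dvd]

lemma Nat.add_one_mul_sub_add_two_mul_choose_two_le {k m : ℕ} (hm : 2 ≤ m) (hmk : m ≤ k) :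
    (k + 1) * (k - m) + 2 * m.choose 2 ≤ 2 * k.choose 2 := by
  obtain ⟨d, rfl⟩ := Nat.exists_eq_add_of_le hmk
  rw [Nat.add_sub_cancel_left]
  clear hmk
  induction d with
  | zero => simp
  | succ d ih =>
    have : (m + (d + 1)).choose 2 = (m + d).choose 2 + (m + d) := by
      rw [← add_assoc, Nat.choose_succ_succ, Nat.choose_one_right, add_comm]
    rw [this]
    nlinarith

lemma SimpleGraph.natCard_edgeSet_le_choose_two {α : Type*} [Finite α] (J : SimpleGraph α) :
    Nat.card J.edgeSet ≤ (Nat.card α).choose 2 := by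
  classical
  have := Fintype.ofFinite α
  rw [Nat.card_eq_fintype_card, ← edgeFinset_card, Nat.card_eq_fintype_card]
  exact card_edgeFinset_le_card_choose_two

lemma SimpleGraph.natCard_edgeSet_top {α : Type*} [Finite α] :
    Nat.card (⊤ : SimpleGraph α).edgeSet = (Nat.card α).choose 2 := by
  classical
  have := Fintype.ofFinite α
  rw [Nat.card_eq_fintype_card, ← edgeFinset_card, Nat.card_eq_fintype_card]
  exact card_edgeFinset_top_eq_card_choose_two

namespace SimpleGraph.Subgraph

variable {V : Type*} {G : SimpleGraph V}

lemma ncard_coe_edgeSet (A : G.Subgraph) : A.coe.edgeSet.ncard = A.edgeSet.ncard := by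
  rw [← image_coe_edgeSet_coe A]
  exact (Set.ncard_image_of_injective _ (Sym2.map.injective Subtype.coe_injective)).symm

lemma ncard_verts_of_iso {α : Type*} {J : SimpleGraph α} {A : G.Subgraph} (e : A.coe ≃g J) :
    A.verts.ncard = Nat.card α := by
  rw [← Nat.card_coe_set_eq, Nat.card_congr e.toEquiv]

lemma ncard_edgeSet_of_iso {α : Type*} {J : SimpleGraph α} {A : G.Subgraph} (e : A.coe ≃g J) :
    A.edgeSet.ncard = Nat.card J.edgeSet := by
  rw [← ncard_coe_edgeSet, ← Nat.card_coe_set_eq, Nat.card_congr e.mapEdgeSet]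

lemma adj_iff_of_iso_completeGraph {α : Type*} {A : G.Subgraph} (e : A.coe ≃g completeGraph α)
    {a b : V} : A.Adj a b ↔ a ∈ A.verts ∧ b ∈ A.verts ∧ a ≠ b := by
  refine ⟨fun h => ⟨A.edge_vert h, A.edge_vert h.symm, (A.adj_sub h).ne⟩, ?_⟩
  rintro ⟨ha, hb, hab⟩
  have : A.coe.Adj ⟨a, ha⟩ ⟨b, hb⟩ :=
    e.map_adj_iff.mp (e.injective.ne (by simpa using hab))
  simpa using this

lemma eq_of_iso_completeGraph_of_verts_eq {α β : Type*} {A B : G.Subgraph}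
    (eA : A.coe ≃g completeGraph α) (eB : B.coe ≃g completeGraph β) (h : A.verts = B.verts) :
    A = B := by
  ext a b
  · rw [h]
  · rw [adj_iff_of_iso_completeGraph eA, adj_iff_of_iso_completeGraph eB, h]

variable [Finite V]

lemma ncard_edgeSet_le_choose_two (A : G.Subgraph) :
    A.edgeSet.ncard ≤ A.verts.ncard.choose 2 := by
  rw [← ncard_coe_edgeSet, ← Nat.card_coe_set_eq, ← Nat.card_coe_set_eq]
  exact natCard_edgeSet_le_choose_two A.coe

lemma two_le_ncard_inter_verts {A B : G.Subgraph} (h : (A.edgeSet ∩ B.edgeSet).Nonempty) :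
    2 ≤ (A.verts ∩ B.verts).ncard := by
  obtain ⟨e, hA, hB⟩ := h
  induction e using Sym2.ind with
  | h a b =>
    rw [Subgraph.mem_edgeSet] at hA hB
    have hab : a ≠ b := (A.adj_sub hA).ne
    have hsub : ({a, b} : Set V) ⊆ A.verts ∩ B.verts :=
      Set.insert_subset ⟨A.edge_vert hA, B.edge_vert hB⟩
        (Set.singleton_subset_iff.mpr ⟨A.edge_vert hA.symm, B.edge_vert hB.symm⟩)
    exact (Set.ncard_pair hab).symm.le.trans (Set.ncard_le_ncard hsub)

/-- Gluing a `k`-clique onto `U` along at least two vertices does not decrease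
`2 e - (k + 1) v`. -/
lemma ncard_verts_sup_le_of_iso_completeGraph {k : ℕ} {A U : G.Subgraph}
    (eA : A.coe ≃g completeGraph (Fin k)) (hAU : 2 ≤ (A.verts ∩ U.verts).ncard) :
    (k + 1) * (U ⊔ A).verts.ncard + 2 * U.edgeSet.ncard ≤
      (k + 1) * U.verts.ncard + 2 * (U ⊔ A).edgeSet.ncard := by
  have hAv : A.verts.ncard = k := (ncard_verts_of_iso eA).trans (Nat.card_fin k)
  have hAe : A.edgeSet.ncard = k.choose 2 := by
    rw [ncard_edgeSet_of_iso eA, natCard_edgeSet_top, Nat.card_fin]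
  have hv : (U ⊔ A).verts.ncard + (A.verts ∩ U.verts).ncard = U.verts.ncard + k := by
    rw [verts_sup, Set.inter_comm, Set.ncard_union_add_ncard_inter, hAv]
  set m := (A.verts ∩ U.verts).ncard
  have hmk : m ≤ k := hAv ▸ Set.ncard_le_ncard Set.inter_subset_left
  have he : (U ⊔ A).edgeSet.ncard + (U ⊓ A).edgeSet.ncard = U.edgeSet.ncard + k.choose 2 := by
    rw [edgeSet_sup, edgeSet_inf, Set.ncard_union_add_ncard_inter, hAe]
  have hinf : (U ⊓ A).edgeSet.ncard ≤ m.choose 2 := by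
    simpa only [verts_inf, Set.inter_comm] using ncard_edgeSet_le_choose_two (U ⊓ A)
  have hkm := Nat.add_one_mul_sub_add_two_mul_choose_two_le hAU hmk
  have hvk : (U ⊔ A).verts.ncard = U.verts.ncard + (k - m) := by omega
  rw [hvk]
  nlinarith

lemma ncard_verts_sup_le_of_cliques_sharing_edge {k : ℕ} {K : G.Subgraph}
    (eK : K.coe ≃g completeGraph (Fin k)) (F : Finset G.Subgraph)
    (hF : ∀ A ∈ F, Nonempty (A.coe ≃g completeGraph (Fin k)) ∧
      (A.edgeSet ∩ K.edgeSet).Nonempty) :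
    (k + 1) * (K ⊔ F.sup id).verts.ncard ≤ 2 * (K ⊔ F.sup id).edgeSet.ncard + 2 * k := by
  classical
  induction F using Finset.induction_on with
  | empty =>
    have hKv : K.verts.ncard = k := (ncard_verts_of_iso eK).trans (Nat.card_fin k)
    have hKe : K.edgeSet.ncard = k.choose 2 := by
      rw [ncard_edgeSet_of_iso eK, natCard_edgeSet_top, Nat.card_fin]
    rw [Finset.sup_empty, sup_bot_eq, hKv, hKe, Nat.two_mul_choose_two]
    rcases k with _ | k
    · simp
    · rw [Nat.add_sub_cancel]
      nlinarith
  | insert A F _ ih =>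
    obtain ⟨⟨eA⟩, hAK⟩ := hF A (Finset.mem_insert_self A F)
    set U := K ⊔ F.sup id
    have hKU : K.edgeSet ⊆ U.edgeSet := edgeSet_mono le_sup_left
    have hAU := two_le_ncard_inter_verts (hAK.mono (Set.inter_subset_inter_right _ hKU))
    have hstep := ncard_verts_sup_le_of_iso_completeGraph eA hAU
    rw [Finset.sup_insert, id, sup_comm A, ← sup_assoc]
    nlinarith [ih fun B hB => hF B (Finset.mem_insert_of_mem hB)]

lemma ncard_le_two_pow_of_iso_completeGraph {k : ℕ} {𝒮 : Set G.Subgraph} {W : Set V}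
    (h𝒮 : ∀ A ∈ 𝒮, Nonempty (A.coe ≃g completeGraph (Fin k)) ∧ A.verts ⊆ W) :
    𝒮.ncard ≤ 2 ^ W.ncard := by
  rw [← Set.ncard_powerset W]
  refine Set.ncard_le_ncard_of_injOn verts (fun A hA => (h𝒮 A hA).2) ?_ (Set.toFinite _)
  intro A hA B hB h
  obtain ⟨eA⟩ := (h𝒮 A hA).1
  obtain ⟨eB⟩ := (h𝒮 B hB).1
  exact eq_of_iso_completeGraph_of_verts_eq eA eB h

end SimpleGraph.Subgraph

lemma copyCount_le_card_pow {α β : Type*} [Finite α] [Finite β] (J : SimpleGraph α)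
    (G : SimpleGraph β) : _root_.copyCount J G ≤ Nat.card β ^ Nat.card α := by
  have hrange :
      {A : G.Subgraph | Nonempty (A.coe ≃g J)} = Set.range (Copy.toSubgraph (A := J)) := by
    rw [Copy.range_toSubgraph]
    ext A
    exact ⟨fun ⟨e⟩ => ⟨e.symm⟩, fun ⟨e⟩ => ⟨e.symm⟩⟩
  have : Finite (Copy J G) := Finite.of_injective _ DFunLike.coe_injective
  calc _root_.copyCount J G = Nat.card (Set.range (Copy.toSubgraph (A := J) (B := G))) := by
        rw [_root_.copyCount, hrange, Nat.card_coe_set_eq]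
    _ ≤ Nat.card (Copy J G) := Finite.card_range_le _
    _ ≤ Nat.card (α → β) := Nat.card_le_card_of_injective _ DFunLike.coe_injective
    _ = Nat.card β ^ Nat.card α := Nat.card_fun

lemma two_mul_ncard_edgeSet_lt_of_qSparse {n : ℕ} {q s : ℝ} {H : SimpleGraph (Fin n)}
    (hH : qSparse q H) (hq0 : 0 ≤ q) (hs : 0 < s) (hq : q < (n : ℝ) ^ (-(2 / s)))
    (I : H.Subgraph) (hI : I.verts.Nonempty) :
    2 * (I.edgeSet.ncard : ℝ) < s * I.verts.ncard := by
  set v := I.verts.ncard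
  set e := I.edgeSet.ncard
  by_contra! hdense
  have hn : (1 : ℝ) ≤ n := by
    obtain ⟨x, -⟩ := hI
    exact_mod_cast x.pos
  have hv : (0 : ℝ) < v := by exact_mod_cast (Set.ncard_pos (Set.toFinite _)).mpr hI
  have he : e ≠ 0 := by
    rintro he
    rw [he, Nat.cast_zero] at hdense
    nlinarith
  have hcount : (_root_.copyCount I.coe (⊤ : SimpleGraph (Fin n)) : ℝ) ≤ (n : ℝ) ^ v := by
    have := copyCount_le_card_pow I.coe (⊤ : SimpleGraph (Fin n))
    rw [Nat.card_fin, Nat.card_coe_set_eq] at this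
    exact_mod_cast this
  have hpow : (n : ℝ) ^ v * ((n : ℝ) ^ (-(2 / s))) ^ e ≤ 1 := by
    rw [← Real.rpow_natCast, ← Real.rpow_natCast, ← Real.rpow_mul (by positivity),
      ← Real.rpow_add (by positivity)]
    apply Real.rpow_le_one_of_one_le_of_nonpos hn
    rw [neg_mul, ← sub_eq_add_neg, sub_nonpos, div_mul_eq_mul_div, le_div_iff₀ hs]
    linarith
  have hexp := hH I
  rw [expCopies, SimpleGraph.Subgraph.ncard_coe_edgeSet] at hexp
  apply lt_irrefl (1 : ℝ)
  calc (1 : ℝ)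
      ≤ _root_.copyCount I.coe (⊤ : SimpleGraph (Fin n)) * q ^ e := hexp
    _ ≤ (n : ℝ) ^ v * q ^ e := by gcongr
    _ < (n : ℝ) ^ v * ((n : ℝ) ^ (-(2 / s))) ^ e := by gcongr
    _ ≤ 1 := hpow

lemma two_pow_lt_exp_one_mul_pow {r : ℕ} (hr : 2 ≤ r) :
    (2 : ℝ) ^ (2 * r + 1) < (Real.exp 1 * r) ^ (r + 1) := by
  have h4 : (4 : ℝ) ≤ Real.exp 1 * r := by
    have he : (2 : ℝ) ≤ Real.exp 1 := by linarith [Real.add_one_le_exp (1 : ℝ)]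
    have hr' : (2 : ℝ) ≤ r := by exact_mod_cast hr
    nlinarith
  calc (2 : ℝ) ^ (2 * r + 1) < 2 ^ (2 * (r + 1)) := pow_lt_pow_right₀ one_lt_two (by omega)
    _ = 4 ^ (r + 1) := by rw [pow_mul]; norm_num
    _ ≤ (Real.exp 1 * r) ^ (r + 1) := pow_le_pow_left₀ (by norm_num) h4 _

/-- Let `r ≥ 2`, `q < n^{-2/(r+1)}`, and let `H` be `q`-sparse on `n` vertices. For any copy
`K` of `K_{r+1}` in `H`, the number of copies of `K_{r+1}` in `H` sharing at least one edge
with `K` is less than `(er)^{r+1}`. -/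
theorem clique_copies_sharing_edge {n r : ℕ} (hr : 2 ≤ r) (q : ℝ) (hq0 : 0 ≤ q)
    (hq : q < (n : ℝ) ^ (-(2 / ((r : ℝ) + 1))))
    (H : SimpleGraph (Fin n)) (hH : qSparse q H)
    (K : H.Subgraph) (hK : Nonempty (K.coe ≃g completeGraph (Fin (r + 1)))) :
    (Set.ncard {K' : H.Subgraph |
        Nonempty (K'.coe ≃g completeGraph (Fin (r + 1))) ∧
        (K'.edgeSet ∩ K.edgeSet).Nonempty} : ℝ)
      < (Real.exp 1 * r) ^ (r + 1) := by
  obtain ⟨eK⟩ := hK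
  set 𝒮 := {K' : H.Subgraph |
    Nonempty (K'.coe ≃g completeGraph (Fin (r + 1))) ∧ (K'.edgeSet ∩ K.edgeSet).Nonempty}
  set U := K ⊔ 𝒮.toFinite.toFinset.sup id
  have hU_glued : (r + 1 + 1) * U.verts.ncard ≤ 2 * U.edgeSet.ncard + 2 * (r + 1) :=
    Subgraph.ncard_verts_sup_le_of_cliques_sharing_edge eK _
      fun A hA => 𝒮.toFinite.mem_toFinset.mp hA
  have hU_ne : U.verts.Nonempty := by
    refine Set.Nonempty.mono (Subgraph.verts_mono le_sup_left) (Set.nonempty_of_ncard_ne_zero ?_)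
    rw [Subgraph.ncard_verts_of_iso eK, Nat.card_fin]
    exact r.succ_ne_zero
  have hU_sparse : 2 * (U.edgeSet.ncard : ℝ) < ((r : ℝ) + 1) * U.verts.ncard :=
    two_mul_ncard_edgeSet_lt_of_qSparse hH hq0 (by positivity) hq U hU_ne
  have hU_small : U.verts.ncard ≤ 2 * r + 1 := by
    have hU_glued' : ((r : ℝ) + 1 + 1) * U.verts.ncard ≤ 2 * U.edgeSet.ncard + 2 * (r + 1) := by
      exact_mod_cast hU_glued
    have : (U.verts.ncard : ℝ) < 2 * r + 2 := by nlinarith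
    exact Nat.lt_succ_iff.mp (by exact_mod_cast this)
  have hcount : 𝒮.ncard ≤ 2 ^ U.verts.ncard :=
    Subgraph.ncard_le_two_pow_of_iso_completeGraph fun A hA => ⟨hA.1,
      Subgraph.verts_mono (le_sup_of_le_right (Finset.le_sup (f := id)
        (𝒮.toFinite.mem_toFinset.mpr hA)))⟩
  calc (𝒮.ncard : ℝ) ≤ 2 ^ (2 * r + 1) := by
        exact_mod_cast hcount.trans (Nat.pow_le_pow_right two_pos hU_small)
    _ < (Real.exp 1 * r) ^ (r + 1) := two_pow_lt_exp_one_mul_pow hr
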